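/- arXiv:1702.04225 — 2 statements merged into one kernel-verified Lean document; each statement's English description precedes it below -/
import Mathlib

section
/- Let X and Y be 1-geodesic metric spaces with W ⊆ X. Suppose C ⊆ X is an (r,A)-coarse complementary component of W and f : X → Y is an (η,φ,B)-coarse isometry. Then for each s ≥ 1 there exists A' ≥ 0 (depending only on A, η, φ, B and s) such that N_B(f(C)) is an (s,A')-coarse complementary component of f(W). -/
open Metric Set
open scoped NNReal

/-- The closed `r`-neighbourhood `N_r(A)` of a subset `A` of a metric space. -/
def nbhd {X : Type*} [PseudoMetricSpace X] (r : ℝ≥0) (A : Set X) : Set X :=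
  {x : X | ∃ a ∈ A, nndist x a ≤ r}

/-- The coarse `r`-boundary `∂_r C := {x ∈ X \ C : d(x,C) ≤ r}`. -/
def coarseBoundary {X : Type*} [PseudoMetricSpace X] (r : ℝ≥0) (C : Set X) : Set X :=
  {x : X | x ∉ C ∧ ∃ c ∈ C, nndist x c ≤ r}

/-- `C` is an `(r,A)`-coarse complementary component of `W`:
`∂_r (C \ N_A(W)) ⊆ N_A(W)`. -/
def IsCCC {X : Type*} [PseudoMetricSpace X] (r A : ℝ≥0) (W C : Set X) : Prop :=
  coarseBoundary r (C \ nbhd A W) ⊆ nbhd A W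

/-- `C` is a coarse complementary component of `W`, i.e. an `(r,A)`-coarse complementary
component for some `r ≥ 1`, `A ≥ 0`. -/
def IsCoarseCompComplement {X : Type*} [PseudoMetricSpace X] (W C : Set X) : Prop :=
  ∃ r A : ℝ≥0, 1 ≤ r ∧ IsCCC r A W C

/-- A coarse complementary component is shallow if contained in some neighbourhood of `W`. -/
def IsShallow {X : Type*} [PseudoMetricSpace X] (W C : Set X) : Prop :=
  ∃ R : ℝ≥0, C ⊆ nbhd R W

/-- A metric space is 1-geodesic if any two points are joined by a discrete geodesic. -/
def OneGeodesic (X : Type*) [PseudoMetricSpace X] : Prop :=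
  ∀ x y : X, ∃ (n : ℕ) (c : ℕ → X), c 0 = x ∧ c n = y ∧
    ∀ i ≤ n, ∀ j ≤ n, dist (c i) (c j) = |(i : ℝ) - (j : ℝ)|

/-- `W` coarsely `n`-separates `X`: there are `n` deep, pairwise coarse disjoint,
coarse complementary components of `W`. -/
def CoarselySeparates {X : Type*} [PseudoMetricSpace X] (n : ℕ) (W : Set X) : Prop :=
  ∃ C : Fin n → Set X,
    (∀ i, IsCoarseCompComplement W (C i)) ∧
    (∀ i, ¬ IsShallow W (C i)) ∧
    ∀ i j : Fin n, i ≠ j → IsShallow W (C i ∩ C j)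

/-- A proper nondecreasing function `ℝ≥0 → ℝ≥0`: nondecreasing and tending to infinity
(equivalently, preimages of compact sets are compact). -/
def ProperND (η : ℝ≥0 → ℝ≥0) : Prop :=
  Monotone η ∧ Filter.Tendsto η Filter.atTop Filter.atTop

/-- `f : X → Y` is an `(η,φ)`-coarse embedding:
`η(d(x,y)) ≤ d(f x, f y) ≤ φ(d(x,y))` for all `x, y`. -/
def IsCoarseEmbeddingWith {X Y : Type*} [PseudoMetricSpace X] [PseudoMetricSpace Y]
    (η φ : ℝ≥0 → ℝ≥0) (f : X → Y) : Prop :=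
  ∀ x y : X, η (nndist x y) ≤ nndist (f x) (f y) ∧ nndist (f x) (f y) ≤ φ (nndist x y)

/-- `f` is a coarse embedding: an `(η,φ)`-coarse embedding for some proper
nondecreasing `η, φ`. -/
def IsCoarseEmbedding {X Y : Type*} [PseudoMetricSpace X] [PseudoMetricSpace Y]
    (f : X → Y) : Prop :=
  ∃ η φ : ℝ≥0 → ℝ≥0, ProperND η ∧ ProperND φ ∧ IsCoarseEmbeddingWith η φ f

/-- `f` is `B`-dense: `N_B(f(X)) = Y`. -/
def IsCoarselyDense {X Y : Type*} [PseudoMetricSpace Y] (B : ℝ≥0) (f : X → Y) : Prop :=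
  ∀ y : Y, ∃ x : X, nndist (f x) y ≤ B

/-- A coarse isometry is a coarsely surjective coarse embedding. -/
def IsCoarseIsometry {X Y : Type*} [PseudoMetricSpace X] [PseudoMetricSpace Y]
    (f : X → Y) : Prop :=
  IsCoarseEmbedding f ∧ ∃ B : ℝ≥0, IsCoarselyDense B f

/-- A geodesic metric space: any two points are joined by an isometrically embedded
segment. -/
def IsGeodesicSpace (X : Type*) [PseudoMetricSpace X] : Prop :=
  ∀ x y : X, ∃ γ : ℝ → X, γ 0 = x ∧ γ (dist x y) = y ∧
    ∀ s ∈ Set.Icc (0 : ℝ) (dist x y), ∀ t ∈ Set.Icc (0 : ℝ) (dist x y),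
      dist (γ s) (γ t) = |s - t|

universe u v

/-!
Let `y` lie in the coarse `s`-boundary of `N_B(f C) \ N_{A'}(f W)`, witnessed by a point `d`
within `B` of some `f c`, and pick `x` with `f x` within `B` of `y`. If `y ∉ N_{A'}(f W)`, then
`x ∉ C` and `c ∉ N_A(W)`, while `d(f x, f c) ≤ 2B + s` bounds `d(x, c)` by a constant `M`
depending only on `η`, `B` and `s`. A discrete geodesic from `c` to `x` leaves `C \ N_A(W)` at a
point of its coarse `r`-boundary, hence within `A` of `W` and within `M + A` of `x`; so `y` is
within `A' = B + φ(M + A)` of `f W`, a contradiction.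
-/

lemma nbhd_mono {X : Type*} [PseudoMetricSpace X] {r r' : ℝ≥0} (h : r ≤ r') (S : Set X) :
    nbhd r S ⊆ nbhd r' S :=
  fun _ ⟨a, ha, hxa⟩ => ⟨a, ha, hxa.trans h⟩

lemma exists_mem_coarseBoundary_of_chain {X : Type*} [PseudoMetricSpace X] {r : ℝ≥0}
    {S : Set X} {c : ℕ → X} :
    ∀ {n : ℕ}, (∀ i < n, nndist (c (i + 1)) (c i) ≤ r) → c 0 ∈ S → c n ∉ S →
      ∃ k ≤ n, c k ∈ coarseBoundary r S
  | 0, _, h0, hn => absurd h0 hn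
  | n + 1, hstep, h0, hn => by
    by_cases hcn : c n ∈ S
    · exact ⟨n + 1, le_rfl, hn, c n, hcn, hstep n n.lt_succ_self⟩
    · obtain ⟨k, hk, hkS⟩ :=
        exists_mem_coarseBoundary_of_chain (fun i hi => hstep i (hi.trans n.lt_succ_self)) h0 hcn
      exact ⟨k, hk.trans n.le_succ, hkS⟩

lemma OneGeodesic.exists_mem_coarseBoundary {X : Type*} [PseudoMetricSpace X]
    (hX : OneGeodesic X) {r : ℝ≥0} (hr : 1 ≤ r) {S : Set X} {x y : X} (hx : x ∈ S)
    (hy : y ∉ S) : ∃ z ∈ coarseBoundary r S, nndist y z ≤ nndist x y := by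
  obtain ⟨n, c, rfl, rfl, hc⟩ := hX x y
  have hstep : ∀ i < n, nndist (c (i + 1)) (c i) ≤ r := fun i hi => by
    rw [← NNReal.coe_le_coe, coe_nndist, hc _ hi _ hi.le]
    simpa using hr
  obtain ⟨k, hk, hkS⟩ := exists_mem_coarseBoundary_of_chain hstep hx hy
  refine ⟨c k, hkS, ?_⟩
  rw [← NNReal.coe_le_coe, coe_nndist, coe_nndist, hc n le_rfl k hk, hc 0 (Nat.zero_le n) n le_rfl]
  have hkn : (k : ℝ) ≤ n := by exact_mod_cast hk
  rw [abs_of_nonneg (sub_nonneg.mpr hkn)]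
  simp

namespace IsCoarseEmbeddingWith

variable {X Y : Type*} [PseudoMetricSpace X] [PseudoMetricSpace Y] {η φ : ℝ≥0 → ℝ≥0}
  {f : X → Y}

lemma nndist_lt_of_nndist_image_le (hf : IsCoarseEmbeddingWith η φ f) {K M : ℝ≥0}
    (hM : ∀ t, M ≤ t → K < η t) {x x' : X} (h : nndist (f x) (f x') ≤ K) : nndist x x' < M :=
  lt_of_not_ge fun hM' => (hM _ hM').not_ge ((hf x x').1.trans h)

lemma mem_nbhd_image (hf : IsCoarseEmbeddingWith η φ f) (hφ : Monotone φ) {B R : ℝ≥0}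
    {W : Set X} {x : X} {y : Y} (hy : nndist y (f x) ≤ B) (hx : x ∈ nbhd R W) :
    y ∈ nbhd (B + φ R) (f '' W) := by
  obtain ⟨w, hw, hxw⟩ := hx
  refine ⟨f w, mem_image_of_mem f hw, ?_⟩
  calc nndist y (f w) ≤ nndist y (f x) + nndist (f x) (f w) := nndist_triangle _ _ _
    _ ≤ B + φ R := add_le_add hy ((hf x w).2.trans (hφ hxw))

end IsCoarseEmbeddingWith

theorem image_isCCC_of_coarseIsometry_general (A : ℝ≥0) (η φ : ℝ≥0 → ℝ≥0) (B : ℝ≥0)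
    (hη : ProperND η) (hφ : ProperND φ) (s : ℝ≥0) :
    ∃ A' : ℝ≥0, ∀ (X : Type u) (Y : Type v) [MetricSpace X] [MetricSpace Y],
      OneGeodesic X → OneGeodesic Y →
      ∀ (W C : Set X) (r : ℝ≥0), 1 ≤ r → IsCCC r A W C →
      ∀ f : X → Y, IsCoarseEmbeddingWith η φ f → IsCoarselyDense B f →
        IsCCC s A' (f '' W) (nbhd B (f '' C)) := by
  obtain ⟨M, hM⟩ := Filter.eventually_atTop.mp (hη.2.eventually_gt_atTop (2 * B + s))
  refine ⟨B + φ (M + A), fun X Y _ _ hX _ W C r hr hCCC f hf hdense => ?_⟩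
  rintro y ⟨hyD, d, ⟨⟨_, ⟨c, hcC, rfl⟩, hdc⟩, hdN⟩, hyd⟩
  by_contra hyN
  obtain ⟨x, hxy⟩ := hdense y
  rw [nndist_comm] at hxy
  have hxC : x ∉ C := fun hxC => hyD ⟨⟨f x, mem_image_of_mem f hxC, hxy⟩, hyN⟩
  have hcN : c ∉ nbhd A W := fun hcW =>
    hdN (hf.mem_nbhd_image hφ.1 hdc (nbhd_mono le_add_self W hcW))
  have hcx : nndist c x < M := hf.nndist_lt_of_nndist_image_le hM <|
    calc nndist (f c) (f x) ≤ nndist (f c) d + nndist d y + nndist y (f x) :=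
        (nndist_triangle _ y _).trans (add_le_add (nndist_triangle _ d _) le_rfl)
      _ ≤ B + s + B := by rw [nndist_comm (f c) d, nndist_comm d y]; gcongr
      _ = 2 * B + s := by ring
  obtain ⟨z, hz, hxz⟩ :=
    hX.exists_mem_coarseBoundary (S := C \ nbhd A W) hr ⟨hcC, hcN⟩ fun h => hxC h.1
  obtain ⟨w, hw, hzw⟩ := hCCC hz
  refine hyN (hf.mem_nbhd_image hφ.1 hxy ⟨w, hw, ?_⟩)
  calc nndist x w ≤ nndist x z + nndist z w := nndist_triangle _ _ _
    _ ≤ M + A := add_le_add (hxz.trans hcx.le) hzw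

/-- Let `X` and `Y` be 1-geodesic metric spaces with `W ⊆ X`. If
`C ⊆ X` is an `(r,A)`-coarse complementary component of `W` and `f : X → Y` is an
`(η,φ,B)`-coarse isometry, then for each `s ≥ 1` there exists `A' ≥ 0`, depending only
on `A, η, φ, B` and `s`, such that `N_B(f(C))` is an `(s,A')`-coarse complementary
component of `f(W)`. -/
theorem image_isCCC_of_coarseIsometry (A : ℝ≥0) (η φ : ℝ≥0 → ℝ≥0) (B : ℝ≥0)
    (hη : ProperND η) (hφ : ProperND φ) (s : ℝ≥0) (hs : 1 ≤ s) :
    ∃ A' : ℝ≥0, ∀ (X : Type u) (Y : Type v) [MetricSpace X] [MetricSpace Y],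
      OneGeodesic X → OneGeodesic Y →
      ∀ (W C : Set X) (r : ℝ≥0), 1 ≤ r → IsCCC r A W C →
      ∀ f : X → Y, IsCoarseEmbeddingWith η φ f → IsCoarselyDense B f →
        IsCCC s A' (f '' W) (nbhd B (f '' C)) :=
  image_isCCC_of_coarseIsometry_general A η φ B hη hφ s
end

section
/- Let G be a group generated by a finite set S, equipped with the word metric d_S, and let H ≤ G be a subgroup. Then for all r ≥ 1 and A ≥ 0 there exists R ≥ A such that every shallow (r,A)-coarse complementary component of H is contained in N_R(H). -/
open Metric Set
open scoped NNReal Pointwise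

/-- The word length of `g` with respect to a generating set `S`: the least `n` such
that `g` is a product of `n` elements of `S ∪ S⁻¹`. -/
noncomputable def wordLength {G : Type*} [Group G] (S : Set G) (g : G) : ℕ :=
  sInf {n : ℕ | ∃ l : List G, (∀ x ∈ l, x ∈ S ∨ x⁻¹ ∈ S) ∧ l.prod = g ∧ l.length = n}

/-- The metric on `G` is the word metric with respect to `S`. -/
def IsWordMetric {G : Type*} [Group G] [MetricSpace G] (S : Set G) : Prop :=
  ∀ g h : G, dist g h = wordLength S (g⁻¹ * h)

/-- A subset `A ⊆ G` is `H`-finite if `A ⊆ H·R` for some finite `R ⊆ G`. -/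
def HFinite {G : Type*} [Group G] (H : Subgroup G) (A : Set G) : Prop :=
  ∃ R : Set G, R.Finite ∧ A ⊆ (H : Set G) * R

/-!
An `r`-chain that starts in `C` and avoids `N_A(H)` never leaves `C`. Since `G` is connected by
unit steps, from any `x ∈ C \ N_A(H)` such a chain reaches `N_{A+r}(H)`, which lies, up to translation
by `H`, in the finite ball of radius `A + r`. So, up to translation, `x` lies in the chain component of
a point of that ball, and this component is shallow as soon as `C` is. The largest bound among the
finitely many shallow components of this kind therefore bounds every shallow `C`.
-/

section PseudoMetric

variable {X : Type*} [PseudoMetricSpace X]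

lemma subset_nbhd (ρ : ℝ≥0) (W : Set X) : W ⊆ nbhd ρ W :=
  fun x hx => ⟨x, hx, by simp⟩

lemma nbhd_mono_s14 {ρ σ : ℝ≥0} (h : ρ ≤ σ) (W : Set X) : nbhd ρ W ⊆ nbhd σ W :=
  fun _ ⟨a, ha, hxa⟩ => ⟨a, ha, hxa.trans h⟩

lemma mem_nbhd_of_nndist_le {ρ s : ℝ≥0} {W : Set X} {x y : X} (hy : y ∈ nbhd ρ W)
    (hxy : nndist x y ≤ s) : x ∈ nbhd (ρ + s) W := by
  obtain ⟨a, ha, hya⟩ := hy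
  exact ⟨a, ha, (nndist_triangle x y a).trans (by rw [add_comm]; gcongr)⟩

def ChainOutside (r A : ℝ≥0) (W : Set X) : X → X → Prop :=
  Relation.ReflTransGen fun x y => x ∉ nbhd A W ∧ y ∉ nbhd A W ∧ nndist x y ≤ r

namespace ChainOutside

variable {r A : ℝ≥0} {W : Set X} {x y : X}

lemma symm (h : ChainOutside r A W x y) : ChainOutside r A W y x :=
  haveI : Std.Symm fun x y : X => x ∉ nbhd A W ∧ y ∉ nbhd A W ∧ nndist x y ≤ r :=
    ⟨fun _ _ ⟨hx, hy, hxy⟩ => ⟨hy, hx, (nndist_comm _ _).trans_le hxy⟩⟩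
  Relation.ReflTransGen.stdSymm.symm _ _ h

end ChainOutside

lemma IsCCC.mem_of_chainOutside {r A : ℝ≥0} {W C : Set X} (hC : IsCCC r A W C) {x y : X}
    (hx : x ∈ C) (hxy : ChainOutside r A W x y) : y ∈ C := by
  induction hxy with
  | refl => exact hx
  | tail _ hstep ih =>
    obtain ⟨hbA, hcA, hbc⟩ := hstep
    by_contra hc
    exact hcA (hC ⟨fun h => hc h.1, _, ⟨ih, hbA⟩, (nndist_comm _ _).trans_le hbc⟩)

/-- Following an `r`-chain from outside `N_A(W)` into `N_A(W)`, the last point before entering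
lies in `N_{A+r}(W)`. -/
lemma exists_chainOutside_mem_nbhd {r A : ℝ≥0} {W : Set X} {x y : X}
    (hxy : Relation.ReflTransGen (fun a b => nndist a b ≤ r) x y) (hy : y ∈ nbhd A W)
    (hx : x ∉ nbhd A W) : ∃ z, ChainOutside r A W x z ∧ z ∈ nbhd (A + r) W := by
  induction hxy using Relation.ReflTransGen.head_induction_on with
  | refl => exact absurd hy hx
  | @head a c hac _ ih =>
    by_cases hc : c ∈ nbhd A W
    · exact ⟨a, .refl, mem_nbhd_of_nndist_le hc hac⟩
    · obtain ⟨z, hcz, hz⟩ := ih hc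
      exact ⟨z, .head ⟨hx, hc, hac⟩ hcz, hz⟩

end PseudoMetric

section LeftInvariant

variable {G : Type*} [Group G] [PseudoMetricSpace G] [IsIsometricSMul G G] {H : Subgroup G}

lemma mul_mem_nbhd_subgroup_iff {g : G} (hg : g ∈ H) (ρ : ℝ≥0) (x : G) :
    g * x ∈ nbhd ρ (H : Set G) ↔ x ∈ nbhd ρ (H : Set G) := by
  have key : ∀ g ∈ H, ∀ x, x ∈ nbhd ρ (H : Set G) → g * x ∈ nbhd ρ (H : Set G) :=
    fun g hg x ⟨a, ha, hxa⟩ => ⟨g * a, H.mul_mem hg ha, (nndist_smul g x a).trans_le hxa⟩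
  refine ⟨fun h => ?_, key g hg x⟩
  simpa using key g⁻¹ (H.inv_mem hg) _ h

lemma ChainOutside.mul_left {r A : ℝ≥0} {g : G} (hg : g ∈ H) {x y : G}
    (h : ChainOutside r A H x y) : ChainOutside r A H (g * x) (g * y) :=
  Relation.ReflTransGen.lift (g * ·) (fun a b ⟨ha, hb, hab⟩ =>
    ⟨(mul_mem_nbhd_subgroup_iff hg A a).not.2 ha, (mul_mem_nbhd_subgroup_iff hg A b).not.2 hb,
      (nndist_smul g a b).trans_le hab⟩) x y h

theorem exists_forall_subset_nbhd_of_isShallow {r A : ℝ≥0}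
    (hconn : ∀ x y : G, Relation.ReflTransGen (fun a b => nndist a b ≤ r) x y)
    (hfin : HFinite H (nbhd (A + r) (H : Set G))) :
    ∃ R : ℝ≥0, A ≤ R ∧ ∀ C : Set G, IsCCC r A (H : Set G) C →
      IsShallow (H : Set G) C → C ⊆ nbhd R (H : Set G) := by
  obtain ⟨B, hBfin, hB⟩ := hfin
  have hbound : ∀ b : G, ∃ R : ℝ≥0, IsShallow (H : Set G) {z | ChainOutside r A H b z} →
      {z | ChainOutside r A H b z} ⊆ nbhd R (H : Set G) := fun b =>
    (em _).elim (fun ⟨R, hR⟩ => ⟨R, fun _ => hR⟩) (fun h => ⟨0, fun h' => (h h').elim⟩)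
  choose bound hbound using hbound
  refine ⟨A ⊔ hBfin.toFinset.sup bound, le_sup_left, fun C hC ⟨RC, hRC⟩ x hx => ?_⟩
  by_cases hxA : x ∈ nbhd A (H : Set G)
  · exact nbhd_mono_s14 le_sup_left _ hxA
  obtain ⟨y, hxy, hy⟩ :=
    exists_chainOutside_mem_nbhd (hconn x 1) (subset_nbhd A _ H.one_mem) hxA
  obtain ⟨h, hh, b, hb, rfl⟩ := hB hy
  have hcomp : IsShallow (H : Set G) {z | ChainOutside r A H b z} := ⟨RC, fun z hz =>
    (mul_mem_nbhd_subgroup_iff hh RC z).1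
      (hRC (hC.mem_of_chainOutside hx (hxy.trans (hz.mul_left hh))))⟩
  have hbx : ChainOutside r A H b (h⁻¹ * x) := by
    simpa using hxy.symm.mul_left (H.inv_mem hh)
  refine nbhd_mono_s14 (le_sup_of_le_right (Finset.le_sup (hBfin.mem_toFinset.2 hb))) _ ?_
  exact (mul_mem_nbhd_subgroup_iff (H.inv_mem hh) _ x).1 (hbound b hcomp hbx)

end LeftInvariant

section WordMetric

variable {G : Type*} [Group G] {S : Set G}

lemma wordLength_prod_le_length {l : List G} (hl : ∀ x ∈ l, x ∈ S ∨ x⁻¹ ∈ S) :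
    wordLength S l.prod ≤ l.length :=
  Nat.sInf_le ⟨l, hl, rfl, rfl⟩

lemma exists_list_length_eq_wordLength (hSgen : Subgroup.closure S = ⊤) (g : G) :
    ∃ l : List G, (∀ x ∈ l, x ∈ S ∨ x⁻¹ ∈ S) ∧ l.prod = g ∧ l.length = wordLength S g := by
  have hg : g ∈ Submonoid.closure (S ∪ S⁻¹) := by
    rw [← Subgroup.closure_toSubmonoid, hSgen]
    trivial
  obtain ⟨l, hl, hlg⟩ := Submonoid.exists_list_of_mem_closure hg
  have hne :
      {n : ℕ | ∃ l : List G, (∀ x ∈ l, x ∈ S ∨ x⁻¹ ∈ S) ∧ l.prod = g ∧ l.length = n}.Nonempty :=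
    ⟨l.length, l, fun x hx => (hl x hx).imp id Set.mem_inv.1, hlg, rfl⟩
  exact Nat.sInf_mem hne

lemma finite_setOf_wordLength_le (hSfin : S.Finite) (hSgen : Subgroup.closure S = ⊤) (n : ℕ) :
    {g : G | wordLength S g ≤ n}.Finite := by
  have : Finite ↥(S ∪ S⁻¹) := (hSfin.union hSfin.inv).to_subtype
  refine ((List.finite_length_le ↥(S ∪ S⁻¹) n).image
    fun l => (l.map Subtype.val).prod).subset fun g hg => ?_
  obtain ⟨l, hl, rfl, hlen⟩ := exists_list_length_eq_wordLength hSgen g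
  lift l to List ↥(S ∪ S⁻¹) using fun x hx => (hl x hx).imp id Set.mem_inv.2
  exact ⟨l, by simpa using hlen.trans_le hg, rfl⟩

variable [MetricSpace G]

lemma IsWordMetric.isIsometricSMul (hword : IsWordMetric S) : IsIsometricSMul G G :=
  ⟨fun g => Isometry.of_dist_eq fun x y => by
    rw [smul_eq_mul, smul_eq_mul, hword, hword, mul_inv_rev, mul_assoc, inv_mul_cancel_left]⟩

lemma IsWordMetric.reflTransGen_dist_le_one (hword : IsWordMetric S)
    (hSgen : Subgroup.closure S = ⊤) (x y : G) :
    Relation.ReflTransGen (fun a b => dist a b ≤ 1) x y := by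
  have : Std.Symm fun a b : G => dist a b ≤ 1 := ⟨fun a b h => dist_comm a b ▸ h⟩
  suffices ∀ g : G, ∀ x, Relation.ReflTransGen (fun a b => dist a b ≤ 1) x (x * g) by
    simpa using this (x⁻¹ * y) x
  intro g
  induction (hSgen ▸ Subgroup.mem_top g : g ∈ Subgroup.closure S) using
    Subgroup.closure_induction with
  | mem s hs =>
    refine fun x => .single ?_
    rw [hword, inv_mul_cancel_left]
    have : wordLength S [s].prod ≤ [s].length := wordLength_prod_le_length (by simp [hs])
    simp only [List.prod_singleton, List.length_singleton] at this
    exact_mod_cast this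
  | one => exact fun x => by simpa using .refl
  | mul a b _ _ iha ihb => exact fun x => mul_assoc x a b ▸ (iha x).trans (ihb (x * a))
  | inv a _ iha =>
    exact fun x => by simpa using Relation.ReflTransGen.stdSymm.symm _ _ (iha (x * a⁻¹))

lemma IsWordMetric.hFinite_nbhd (hword : IsWordMetric S) (hSfin : S.Finite)
    (hSgen : Subgroup.closure S = ⊤) (H : Subgroup G) (ρ : ℝ≥0) :
    HFinite H (nbhd ρ (H : Set G)) := by
  refine ⟨_, finite_setOf_wordLength_le hSfin hSgen ⌊ρ⌋₊, fun x ⟨a, ha, hxa⟩ =>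
    ⟨a, ha, a⁻¹ * x, Nat.le_floor ?_, mul_inv_cancel_left a x⟩⟩
  rw [← NNReal.coe_le_coe, coe_nndist, dist_comm, hword] at hxa
  exact_mod_cast hxa

end WordMetric

/-- Let `G` be a group generated by a finite set `S`, with the word
metric, and `H ≤ G` a subgroup. For all `r ≥ 1` and `A ≥ 0` there exists `R ≥ A` such
that every shallow `(r,A)`-coarse complementary component of `H` is contained in
`N_R(H)`. -/
theorem shallow_coarseComp_uniformly_bounded {G : Type*} [Group G] [MetricSpace G]
    (S : Set G) (hSfin : S.Finite) (hSgen : Subgroup.closure S = ⊤)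
    (hword : IsWordMetric S) (H : Subgroup G) (r A : ℝ≥0) (hr : 1 ≤ r) :
    ∃ R : ℝ≥0, A ≤ R ∧ ∀ C : Set G, IsCCC r A (H : Set G) C →
      IsShallow (H : Set G) C → C ⊆ nbhd R (H : Set G) := by
  have := hword.isIsometricSMul
  refine exists_forall_subset_nbhd_of_isShallow (fun x y => ?_)
    (hword.hFinite_nbhd hSfin hSgen H (A + r))
  refine Relation.ReflTransGen.mono (fun a b hab => ?_) _ _
    (hword.reflTransGen_dist_le_one hSgen x y)
  rw [← NNReal.coe_le_coe, coe_nndist]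
  exact hab.trans (mod_cast hr)
end
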